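/- arXiv:2106.13969 — 4 statements merged into one kernel-verified Lean document; each statement's English description precedes it below -/
import Mathlib

section
/- Let n ≥ 1 and let k be an integer with gcd(k,n) = 1. Then the pair (w̄_n^k, s̄_n) is conjugate in PGL_n(ℂ) to the pair (s̄_n, w̄_n^{-k}); that is, there exists g ∈ GL_n(ℂ) and scalars λ, μ ∈ ℂ^× with g·w_n^k·g^{-1} = λ·s_n and g·s_n·g^{-1} = μ·w_n^{-k}. -/
/-- `PGL_n(ℂ)`: the quotient of `GL_n(ℂ)` by its center (the nonzero scalar matrices). -/
abbrev PGLn (n : ℕ) : Type :=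
  GL (Fin n) ℂ ⧸ Subgroup.center (GL (Fin n) ℂ)

/-- The permutation matrix `w_n` of the `n`-cycle: `w_n · e_j = e_{j+1}`, indices mod `n`. -/
def cycleMat (n : ℕ) [NeZero n] : Matrix (Fin n) (Fin n) ℂ :=
  Matrix.of fun i j : Fin n => if i = j + 1 then 1 else 0

/-- The diagonal matrix `s_n = diag(1, ζ, ζ², …, ζ^{n-1})`. -/
def diagZeta (n : ℕ) (ζ : ℂ) : Matrix (Fin n) (Fin n) ℂ :=
  Matrix.diagonal fun j : Fin n => ζ ^ (j : ℕ)

/-- An element of `PGL_n(ℂ)` is semisimple if it is the image of a diagonalizable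
(invertible) matrix. -/
def IsSemisimplePGL (n : ℕ) (x : PGLn n) : Prop :=
  ∃ A : GL (Fin n) ℂ,
    (∃ g : GL (Fin n) ℂ, ((g * A * g⁻¹ : GL (Fin n) ℂ) : Matrix (Fin n) (Fin n) ℂ).IsDiag) ∧
    QuotientGroup.mk A = x

/-!
If `c * k ≡ 1 (mod n)`, the matrix `F = (ζ^{c i j})_{i,j}` is a rescaled discrete Fourier
transform, invertible by orthogonality of the characters `j ↦ ζ^{x j}`. Conjugation by `F`
turns the shift by `k` into multiplication by the character `i ↦ ζ^i`, i.e. `F w^k F⁻¹ = s`,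
and turns multiplication by `ζ^j` into the shift by `-k`, i.e. `F s F⁻¹ = w^{-k}`; so the
scalars can both be taken to be `1`.
-/

open Matrix
open scoped Fin.CommRing

theorem Equiv.addRight_zpow {G : Type*} [AddGroup G] (a : G) (k : ℤ) :
    Equiv.addRight a ^ k = Equiv.addRight (k • a) := by
  have hcomm : ∀ m : ℕ, AddCommute a (m • a) := (AddCommute.refl a).nsmul_right
  induction k using Int.induction_on with
  | zero => ext; simp
  | succ m ih => ext; simp [_root_.zpow_add_one, ih, add_zsmul, add_assoc, (hcomm m).eq]
  | pred m ih =>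
    ext; simp [_root_.zpow_sub_one, ih, sub_zsmul, add_assoc, (hcomm m).neg_left.neg_right.eq]

section Fourier

variable {R K : Type*} [CommRing R] [Field K]

def fourierMatrix (ψ : AddChar R K) (c : R) : Matrix R R K :=
  Matrix.of fun i j => ψ (c * i * j)

variable [Fintype R] [DecidableEq R] {ψ : AddChar R K} {c k : R}

theorem fourierMatrix_mul_fourierMatrix_neg (hψ : ψ.IsPrimitive) (hc : IsUnit c) :
    fourierMatrix ψ c * fourierMatrix ψ (-c) = (Fintype.card R : K) • 1 := by
  ext i l
  have hterm : ∀ j, ψ (c * i * j) * ψ (-c * j * l) = ψ (j * (c * (i - l))) := fun j => by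
    rw [← AddChar.map_add_eq_mul]; ring_nf
  simp only [fourierMatrix, mul_apply, of_apply, hterm, AddChar.sum_mulShift _ hψ,
    hc.mul_right_eq_zero, sub_eq_zero, Matrix.smul_apply, one_apply]
  split_ifs <;> simp

theorem isUnit_fourierMatrix [CharZero K] (hψ : ψ.IsPrimitive) (hc : IsUnit c) :
    IsUnit (fourierMatrix ψ c) := by
  refine IsUnit.of_mul_eq_one ((Fintype.card R : K)⁻¹ • fourierMatrix ψ (-c)) ?_
  rw [mul_smul_comm, fourierMatrix_mul_fourierMatrix_neg hψ hc, smul_smul,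
    inv_mul_cancel₀ (Nat.cast_ne_zero.mpr Fintype.card_ne_zero), one_smul]

theorem fourierMatrix_mul_subRight_toMatrix (hck : c * k = 1) :
    fourierMatrix ψ c * (Equiv.subRight k).toPEquiv.toMatrix = diagonal ψ * fourierMatrix ψ c := by
  ext i j
  rw [PEquiv.mul_toMatrix_toPEquiv, diagonal_mul]
  simp only [fourierMatrix, submatrix_apply, of_apply, id, Equiv.subRight_symm_apply,
    ← AddChar.map_add_eq_mul]
  congr 1
  linear_combination i * hck

theorem fourierMatrix_mul_diagonal (hck : c * k = 1) :
    fourierMatrix ψ c * diagonal ψ =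
      (Equiv.subRight (-k)).toPEquiv.toMatrix * fourierMatrix ψ c := by
  ext i j
  rw [PEquiv.toMatrix_toPEquiv_mul, mul_diagonal]
  simp only [fourierMatrix, submatrix_apply, of_apply, id, Equiv.subRight_apply, sub_neg_eq_add,
    ← AddChar.map_add_eq_mul]
  congr 1
  linear_combination (-j) * hck

end Fourier

namespace AddChar

variable {M : Type*} [Monoid M] {n : ℕ} [NeZero n] {ζ : M}

def finChar (n : ℕ) [NeZero n] (hζ : ζ ^ n = 1) : AddChar (Fin n) M where
  toFun a := ζ ^ a.val
  map_zero_eq_one' := by simp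
  map_add_eq_mul' a b := by rw [Fin.val_add, ← pow_eq_pow_mod _ hζ, pow_add]

theorem finChar_apply (hζ : ζ ^ n = 1) (a : Fin n) : finChar n hζ a = ζ ^ a.val := rfl

theorem finChar_isPrimitive {C : Type*} [CommMonoid C] {ζ : C} (hζ : IsPrimitiveRoot ζ n) :
    (finChar n hζ.pow_eq_one).IsPrimitive := by
  intro a ha h
  have h1 : ζ ^ a.val = 1 := by simpa [finChar_apply] using DFunLike.congr_fun h 1
  exact ha (Fin.ext (Nat.eq_zero_of_dvd_of_lt ((hζ.pow_eq_one_iff_dvd _).mp h1) a.isLt))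

end AddChar

theorem Fin.exists_mul_intCast_eq_one {n : ℕ} [NeZero n] {k : ℤ} (hk : Int.gcd k n = 1) :
    ∃ c : Fin n, c * k = 1 := by
  obtain ⟨a, b, hab⟩ := Int.isCoprime_iff_gcd_eq_one.mpr hk
  exact ⟨a, by simpa using congrArg (Int.cast : ℤ → Fin n) hab⟩

theorem diagZeta_eq_diagonal_finChar {n : ℕ} [NeZero n] {ζ : ℂ} (hζ : ζ ^ n = 1) :
    diagZeta n ζ = diagonal (AddChar.finChar n hζ) :=
  rfl

theorem val_zpow_of_val_eq_cycleMat {n : ℕ} [NeZero n] {W : GL (Fin n) ℂ}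
    (hW : (W : Matrix (Fin n) (Fin n) ℂ) = cycleMat n) (k : ℤ) :
    ((W ^ k : GL (Fin n) ℂ) : Matrix (Fin n) (Fin n) ℂ) =
      (Equiv.subRight (k : Fin n)).toPEquiv.toMatrix := by
  have hW' : W = permMatrixHom.toHomUnits (Equiv.addRight 1) := by
    ext i j
    simp [hW, cycleMat, PEquiv.toMatrix_apply, add_neg_eq_iff_eq_add]
  rw [hW', ← map_zpow, Equiv.addRight_zpow, zsmul_one]
  simp [← Equiv.subRight_eq_addRight_neg]

theorem Units.val_conj_eq_of_mul_eq {M : Type*} [Monoid M] {g x y : Mˣ}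
    (h : (g : M) * x = y * g) : ((g * x * g⁻¹ : Mˣ) : M) = y := by
  rw [_root_.mul_inv_eq_iff_eq_mul.mpr (Units.ext h)]

/-- Let `n ≥ 1` and let `k` be an integer with `gcd(k,n) = 1`.  Then the pair
`(w̄_n^k, s̄_n)` is conjugate in `PGL_n(ℂ)` to the pair `(s̄_n, w̄_n^{-k})`; that is, there
exist `g ∈ GL_n(ℂ)` and scalars `λ, μ ∈ ℂˣ` with `g w_n^k g⁻¹ = λ s_n` and
`g s_n g⁻¹ = μ w_n^{-k}`. -/
theorem stmt4 (n : ℕ) [NeZero n] (ζ : ℂ) (hζ : IsPrimitiveRoot ζ n)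
    (S W : GL (Fin n) ℂ)
    (hS : (S : Matrix (Fin n) (Fin n) ℂ) = diagZeta n ζ)
    (hW : (W : Matrix (Fin n) (Fin n) ℂ) = cycleMat n)
    (k : ℤ) (hk : Int.gcd k n = 1) :
    ∃ (g : GL (Fin n) ℂ) (lam mu : ℂˣ),
      ((g * W ^ k * g⁻¹ : GL (Fin n) ℂ) : Matrix (Fin n) (Fin n) ℂ)
          = (lam : ℂ) • (S : Matrix (Fin n) (Fin n) ℂ) ∧
      ((g * S * g⁻¹ : GL (Fin n) ℂ) : Matrix (Fin n) (Fin n) ℂ)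
          = (mu : ℂ) • ((W ^ (-k) : GL (Fin n) ℂ) : Matrix (Fin n) (Fin n) ℂ) := by
  set ψ := AddChar.finChar n hζ.pow_eq_one
  obtain ⟨c, hck⟩ := Fin.exists_mul_intCast_eq_one hk
  obtain ⟨g, hg⟩ :=
    isUnit_fourierMatrix (AddChar.finChar_isPrimitive hζ) (IsUnit.of_mul_eq_one _ hck)
  have hSψ : (S : Matrix (Fin n) (Fin n) ℂ) = diagonal ψ :=
    hS.trans (diagZeta_eq_diagonal_finChar hζ.pow_eq_one)
  refine ⟨g, 1, 1, ?_, ?_⟩ <;> rw [Units.val_one, one_smul] <;>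
    apply Units.val_conj_eq_of_mul_eq
  · rw [hg, val_zpow_of_val_eq_cycleMat hW, hSψ]
    exact fourierMatrix_mul_subRight_toMatrix hck
  · rw [hg, val_zpow_of_val_eq_cycleMat hW, hSψ, Int.cast_neg]
    exact fourierMatrix_mul_diagonal hck
end

section
/- Let n ≥ 1, let ζ ∈ ℂ be a primitive n-th root of unity, s_n = diag(1, ζ, …, ζ^{n-1}), and let w_n be the n-cycle permutation matrix. Then g ∈ GL_n(ℂ) satisfies g·s_n·g^{-1} = λ·s_n for some λ ∈ ℂ^× if and only if g = d·w_n^k for some invertible diagonal matrix d and some integer k. In particular, the centralizer of s̄_n in PGL_n(ℂ) is generated by the image of the diagonal torus together with w̄_n, and is isomorphic to T ⋊ ℤ/nℤ where T is the image of the diagonal torus. -/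
/-- The image of the diagonal torus of `GL_n(ℂ)` in `PGL_n(ℂ)` (as a subgroup: it is the
closure of the set of images of invertible diagonal matrices, which is already a subgroup). -/
def diagTorusPGL (n : ℕ) : Subgroup (PGLn n) :=
  Subgroup.closure {x : PGLn n | ∃ d : GL (Fin n) ℂ,
    ((d : Matrix (Fin n) (Fin n) ℂ)).IsDiag ∧ QuotientGroup.mk d = x}

/-!
If `g s g⁻¹ = λ s`, comparing entries of `g s = λ s g` shows that `g i j ≠ 0` forces
`ζ ^ j = λ ζ ^ i`; as `ζ` is primitive, all nonzero entries of `g` lie on one cyclic diagonal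
`j = i + k`, so `g wᵏ` is diagonal. In `PGL_n` this makes the centralizer of `s̄` equal to
`T · ⟨w̄⟩`, with `T` the image of the diagonal torus. Conjugation by `w` permutes diagonal entries cyclically, so `T` is normal in it, and
`w ^ m` is diagonal only when `n ∣ m`, so `T ∩ ⟨w̄⟩ = 1` and `⟨w̄⟩ ≅ ℤ/nℤ`: the centralizer is the
internal semidirect product `T ⋊ ⟨w̄⟩`.
-/

open Matrix Subgroup

namespace Matrix

theorem IsDiag.mul {ι R : Type*} [Fintype ι] [DecidableEq ι] [Semiring R] {A B : Matrix ι ι R}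
    (hA : A.IsDiag) (hB : B.IsDiag) : (A * B).IsDiag := by
  rw [← hA.diagonal_diag, ← hB.diagonal_diag, diagonal_mul_diagonal]
  exact isDiag_diagonal _

theorem isDiag_submatrix_equiv_iff {ι R : Type*} [Zero R] {A : Matrix ι ι R} (e : ι ≃ ι) :
    (A.submatrix e e).IsDiag ↔ A.IsDiag := by
  refine ⟨fun h i j hij => ?_, fun h => h.submatrix e.injective⟩
  simpa using h (e.symm.injective.ne hij)

namespace GeneralLinearGroup

variable (ι K : Type*) [Fintype ι] [DecidableEq ι] [Field K]

def diagonalTorus : Subgroup (GL ι K) where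
  carrier := {g | (g : Matrix ι ι K).IsDiag}
  one_mem' := isDiag_one
  mul_mem' ha hb := by simpa only [Set.mem_ofPred_eq, Units.val_mul] using ha.mul hb
  inv_mem' {g} hg := by
    simp only [Set.mem_ofPred_eq, coe_units_inv]
    rw [← hg.diagonal_diag, inv_diagonal]
    exact isDiag_diagonal _

variable {ι K}

theorem coe_conj_eq_smul_iff (g s : GL ι K) (c : K) :
    ((g * s * g⁻¹ : GL ι K) : Matrix ι ι K) = c • (s : Matrix ι ι K) ↔
      (g : Matrix ι ι K) * s = c • ((s : Matrix ι ι K) * g) := by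
  rw [Units.val_mul, Units.mul_inv_eq_iff_eq_mul, Units.val_mul, smul_mul_assoc]

theorem mk_mem_centralizer_singleton_iff {g s : GL ι K} :
    (QuotientGroup.mk g : GL ι K ⧸ center (GL ι K)) ∈
        centralizer {(QuotientGroup.mk s : GL ι K ⧸ center (GL ι K))} ↔
      ∃ c : K, c ≠ 0 ∧ ((g * s * g⁻¹ : GL ι K) : Matrix ι ι K) = c • (s : Matrix ι ι K) := by
  rw [mem_centralizer_singleton_iff, ← mul_inv_eq_iff_eq_mul, ← QuotientGroup.mk_mul,
    ← QuotientGroup.mk_inv, ← QuotientGroup.mk_mul, eq_comm, QuotientGroup.eq,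
    center_eq_range_scalar, ← Units.exists_iff_ne_zero]
  refine exists_congr fun u => ?_
  rw [eq_inv_mul_iff_mul_eq, eq_comm, Units.ext_iff, Units.val_mul s, coe_scalar, scalar_apply,
    smul_eq_mul_diagonal]

theorem mk_mem_closure_isDiag_iff {g : GL ι K} :
    (QuotientGroup.mk g : GL ι K ⧸ center (GL ι K)) ∈
        Subgroup.closure {x | ∃ d : GL ι K, (d : Matrix ι ι K).IsDiag ∧ QuotientGroup.mk d = x} ↔
      (g : Matrix ι ι K).IsDiag := by
  have himage : {x : GL ι K ⧸ center (GL ι K) |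
      ∃ d : GL ι K, (d : Matrix ι ι K).IsDiag ∧ QuotientGroup.mk d = x} =
      (diagonalTorus ι K).map (QuotientGroup.mk' (center (GL ι K))) := by
    ext; simp [diagonalTorus]
  rw [himage, closure_eq]
  refine ⟨?_, fun hg => ⟨g, hg, rfl⟩⟩
  rintro ⟨d, hd, hdg⟩
  obtain ⟨u, hu⟩ := center_eq_range_scalar (R := K) (n := ι) ▸ QuotientGroup.eq.mp hdg
  rw [eq_inv_mul_iff_mul_eq] at hu
  rw [← hu, Units.val_mul, coe_scalar]
  exact hd.mul (isDiag_diagonal _)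

end GeneralLinearGroup

end Matrix

theorem Subgroup.isComplement'_subgroupOf {G : Type*} [Group G] {H K L : Subgroup G}
    (hHK : Disjoint H K) (hHL : H ≤ L) (hKL : K ≤ L)
    (hL : ∀ x ∈ L, ∃ h ∈ H, ∃ k ∈ K, h * k = x) :
    (H.subgroupOf L).IsComplement' (K.subgroupOf L) := by
  refine isComplement'_of_disjoint_and_mul_eq_univ ?_ (Set.eq_univ_of_forall fun x => ?_)
  · rw [disjoint_def] at hHK ⊢
    exact fun hxH hxK => Subtype.ext (hHK hxH hxK)
  · obtain ⟨h, hh, k, hk, hx⟩ := hL x x.2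
    exact ⟨⟨h, hHL hh⟩, hh, ⟨k, hKL hk⟩, hk, Subtype.ext hx⟩

open Fin.NatCast

theorem Fin.pow_val_add {M : Type*} [Monoid M] {n : ℕ} {y : M} (hy : y ^ n = 1) (i j : Fin n) :
    y ^ ((i + j : Fin n) : ℕ) = y ^ (i : ℕ) * y ^ (j : ℕ) := by
  rw [Fin.val_add, ← pow_eq_pow_mod _ hy, pow_add]

section Cyclic

variable {n : ℕ} [NeZero n]

theorem mul_cycleMat_apply (A : Matrix (Fin n) (Fin n) ℂ) (i j : Fin n) :
    (A * cycleMat n) i j = A i (j + 1) := by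
  simp [cycleMat, mul_apply]

theorem mul_cycleMat_pow_apply (A : Matrix (Fin n) (Fin n) ℂ) (m : ℕ) (i j : Fin n) :
    (A * cycleMat n ^ m) i j = A i (j + m) := by
  induction m generalizing j with
  | zero => simp
  | succ m ih =>
    rw [pow_succ, ← mul_assoc, mul_cycleMat_apply, ih, Nat.cast_succ, add_right_comm, add_assoc]

theorem cycleMat_pow_apply (m : ℕ) (i j : Fin n) :
    (cycleMat n ^ m) i j = if i = j + m then 1 else 0 := by
  rw [← one_mul (cycleMat n ^ m), mul_cycleMat_pow_apply, one_apply]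

theorem cycleMat_pow_self : cycleMat n ^ n = 1 := by
  ext i j
  rw [cycleMat_pow_apply, Fin.natCast_self, add_zero, one_apply]

theorem isDiag_cycleMat_pow_iff (m : ℕ) : (cycleMat n ^ m).IsDiag ↔ n ∣ m := by
  rw [← Fin.natCast_eq_zero]
  refine ⟨fun h => by_contra fun hm => ?_, fun hm i j hij => ?_⟩
  · simpa [cycleMat_pow_apply] using h (i := (m : Fin n)) (j := 0) hm
  · change (cycleMat n ^ m) i j = 0
    rw [cycleMat_pow_apply, hm, add_zero, if_neg hij]

theorem cycleMat_mul_eq_submatrix_mul (A : Matrix (Fin n) (Fin n) ℂ) :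
    cycleMat n * A = A.submatrix (Equiv.subRight 1) (Equiv.subRight 1) * cycleMat n := by
  ext i j
  rw [mul_cycleMat_apply]
  simp only [cycleMat, mul_apply, of_apply, ite_mul, one_mul, zero_mul, ← sub_eq_iff_eq_add,
    Finset.sum_ite_eq, Finset.mem_univ, if_true, submatrix_apply, Equiv.subRight_apply,
    add_sub_cancel_right]

theorem diagZeta_mul_cycleMat {ζ : ℂ} (hζ : ζ ^ n = 1) :
    diagZeta n ζ * cycleMat n = ζ • (cycleMat n * diagZeta n ζ) := by
  ext i j
  simp only [diagZeta, diagonal_mul, Matrix.smul_apply, mul_diagonal, cycleMat, of_apply,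
    smul_eq_mul]
  split_ifs with hij
  · rw [hij, Fin.pow_val_add hζ, ← Nat.cast_one, Fin.val_natCast, ← pow_eq_pow_mod _ hζ]
    ring
  · simp

end Cyclic

section DiagZetaSupport

variable {n : ℕ} {ζ : ℂ}

theorem pow_val_eq_mul_of_mul_diagZeta {A : Matrix (Fin n) (Fin n) ℂ} {c : ℂ}
    (h : A * diagZeta n ζ = c • (diagZeta n ζ * A)) {i j : Fin n} (hij : A i j ≠ 0) :
    ζ ^ (j : ℕ) = c * ζ ^ (i : ℕ) := by
  have hentry := congrFun (congrFun h i) j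
  simp only [diagZeta, mul_diagonal, diagonal_mul, Matrix.smul_apply, smul_eq_mul] at hentry
  exact mul_left_cancel₀ hij (by linear_combination hentry)

theorem exists_shift_of_mul_diagZeta [NeZero n] (hζ : IsPrimitiveRoot ζ n)
    {A : Matrix (Fin n) (Fin n) ℂ} (hA : A ≠ 0) {c : ℂ}
    (h : A * diagZeta n ζ = c • (diagZeta n ζ * A)) :
    ∃ k : Fin n, ∀ i j, A i j ≠ 0 → j = i + k := by
  obtain ⟨i₀, j₀, h₀⟩ : ∃ i j, A i j ≠ 0 := by
    by_contra! hzero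
    exact hA (Matrix.ext hzero)
  have hζn := hζ.pow_eq_one
  refine ⟨j₀ - i₀, fun i j hij => Fin.ext (hζ.pow_inj j.isLt (i + (j₀ - i₀)).isLt ?_)⟩
  have hc : c = ζ ^ ((j₀ - i₀ : Fin n) : ℕ) := by
    refine mul_right_cancel₀ (pow_ne_zero (i₀ : ℕ) (hζ.ne_zero (NeZero.ne n))) ?_
    rw [← pow_val_eq_mul_of_mul_diagZeta h h₀, ← Fin.pow_val_add hζn, sub_add_cancel]
  rw [pow_val_eq_mul_of_mul_diagZeta h hij, hc, Fin.pow_val_add hζn, mul_comm]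

theorem exists_isDiag_mul_pow_of_mul_diagZeta [NeZero n] {W : GL (Fin n) ℂ}
    (hζ : IsPrimitiveRoot ζ n) (hW : (W : Matrix (Fin n) (Fin n) ℂ) = cycleMat n)
    {g : GL (Fin n) ℂ} {c : ℂ}
    (h : (g : Matrix (Fin n) (Fin n) ℂ) * diagZeta n ζ = c • (diagZeta n ζ * g)) :
    ∃ (d : GL (Fin n) ℂ) (m : ℕ), (d : Matrix (Fin n) (Fin n) ℂ).IsDiag ∧ g = d * W ^ m := by
  obtain ⟨k, hk⟩ := exists_shift_of_mul_diagZeta hζ g.ne_zero h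
  set m : ℕ := ((-k : Fin n) : ℕ)
  refine ⟨g * (W ^ m)⁻¹, m, fun i l hil => ?_, by group⟩
  have hg : (g : Matrix (Fin n) (Fin n) ℂ) =
      ((g * (W ^ m)⁻¹ : GL (Fin n) ℂ) : Matrix (Fin n) (Fin n) ℂ) * cycleMat n ^ m := by
    rw [← hW, ← Units.val_pow_eq_pow_val, ← Units.val_mul, inv_mul_cancel_right]
  have hentry := congrFun (congrFun hg i) (l + k)
  rw [mul_cycleMat_pow_apply, Fin.cast_val_eq_self, add_neg_cancel_right] at hentry
  change _ = 0
  rw [← hentry]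
  by_contra hne
  exact hil (add_right_cancel (hk _ _ hne)).symm

end DiagZetaSupport

section ProjectiveCentralizer

open QuotientGroup GeneralLinearGroup

variable {n : ℕ} {ζ : ℂ} {S W : GL (Fin n) ℂ}

theorem mk_mem_diagTorusPGL_iff (g : GL (Fin n) ℂ) :
    (mk g : PGLn n) ∈ diagTorusPGL n ↔ (g : Matrix (Fin n) (Fin n) ℂ).IsDiag :=
  mk_mem_closure_isDiag_iff

theorem diagTorusPGL_le_centralizer (hS : (S : Matrix (Fin n) (Fin n) ℂ) = diagZeta n ζ) :
    diagTorusPGL n ≤ centralizer {(mk S : PGLn n)} := by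
  intro x hx
  induction x using QuotientGroup.induction_on with | H g => ?_
  rw [mk_mem_diagTorusPGL_iff] at hx
  refine mk_mem_centralizer_singleton_iff.mpr ⟨1, one_ne_zero, ?_⟩
  rw [coe_conj_eq_smul_iff, one_smul, hS, diagZeta, ← hx.diagonal_diag, diagonal_mul_diagonal,
    diagonal_mul_diagonal]
  simp_rw [mul_comm]

variable [NeZero n]

theorem mk_cycle_mem_centralizer (hζ : IsPrimitiveRoot ζ n)
    (hS : (S : Matrix (Fin n) (Fin n) ℂ) = diagZeta n ζ)
    (hW : (W : Matrix (Fin n) (Fin n) ℂ) = cycleMat n) :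
    (mk W : PGLn n) ∈ centralizer {(mk S : PGLn n)} := by
  have hζ0 : ζ ≠ 0 := hζ.ne_zero (NeZero.ne n)
  refine mk_mem_centralizer_singleton_iff.mpr ⟨ζ⁻¹, inv_ne_zero hζ0, ?_⟩
  rw [coe_conj_eq_smul_iff, hS, hW, diagZeta_mul_cycleMat hζ.pow_eq_one, smul_smul,
    inv_mul_cancel₀ hζ0, one_smul]

theorem coe_cycle_conj (hW : (W : Matrix (Fin n) (Fin n) ℂ) = cycleMat n) (g : GL (Fin n) ℂ) :
    ((W * g * W⁻¹ : GL (Fin n) ℂ) : Matrix (Fin n) (Fin n) ℂ) =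
      (g : Matrix (Fin n) (Fin n) ℂ).submatrix (Equiv.subRight 1) (Equiv.subRight 1) := by
  rw [Units.val_mul, Units.mul_inv_eq_iff_eq_mul, Units.val_mul, hW, cycleMat_mul_eq_submatrix_mul]

theorem mk_cycle_mem_normalizer (hW : (W : Matrix (Fin n) (Fin n) ℂ) = cycleMat n) :
    (mk W : PGLn n) ∈ normalizer (diagTorusPGL n : Set (PGLn n)) := by
  refine mem_normalizer_iff.mpr fun x => ?_
  induction x using QuotientGroup.induction_on with | H g => ?_
  rw [← mk_inv, ← mk_mul, ← mk_mul, mk_mem_diagTorusPGL_iff, mk_mem_diagTorusPGL_iff,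
    coe_cycle_conj hW, isDiag_submatrix_equiv_iff]

theorem cycle_pow_self (hW : (W : Matrix (Fin n) (Fin n) ℂ) = cycleMat n) : W ^ n = 1 :=
  Units.ext (by rw [Units.val_pow_eq_pow_val, hW, cycleMat_pow_self, Units.val_one])

theorem mk_cycle_pow_mem_diagTorusPGL_iff (hW : (W : Matrix (Fin n) (Fin n) ℂ) = cycleMat n)
    (m : ℕ) : (mk W : PGLn n) ^ m ∈ diagTorusPGL n ↔ n ∣ m := by
  rw [← mk_pow, mk_mem_diagTorusPGL_iff, Units.val_pow_eq_pow_val, hW, isDiag_cycleMat_pow_iff]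

theorem orderOf_mk_cycle (hW : (W : Matrix (Fin n) (Fin n) ℂ) = cycleMat n) :
    orderOf (mk W : PGLn n) = n := by
  refine Nat.dvd_antisymm (orderOf_dvd_of_pow_eq_one ?_) ?_
  · rw [← mk_pow, cycle_pow_self hW, mk_one]
  · rw [← mk_cycle_pow_mem_diagTorusPGL_iff hW, pow_orderOf_eq_one]
    exact one_mem _

theorem disjoint_diagTorusPGL_zpowers (hW : (W : Matrix (Fin n) (Fin n) ℂ) = cycleMat n) :
    Disjoint (diagTorusPGL n) (zpowers (mk W : PGLn n)) := by
  have hfin : IsOfFinOrder (mk W : PGLn n) := by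
    rw [← orderOf_pos_iff, orderOf_mk_cycle hW]
    exact Nat.pos_of_neZero n
  rw [disjoint_def]
  intro x hxT hxW
  obtain ⟨m, rfl⟩ := hfin.mem_powers_iff_mem_zpowers.mpr hxW
  rw [← orderOf_dvd_iff_pow_eq_one, orderOf_mk_cycle hW, ← mk_cycle_pow_mem_diagTorusPGL_iff hW]
  exact hxT

theorem exists_mem_diagTorusPGL_mul_pow_eq (hζ : IsPrimitiveRoot ζ n)
    (hS : (S : Matrix (Fin n) (Fin n) ℂ) = diagZeta n ζ)
    (hW : (W : Matrix (Fin n) (Fin n) ℂ) = cycleMat n) {x : PGLn n}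
    (hx : x ∈ centralizer {(mk S : PGLn n)}) :
    ∃ t ∈ diagTorusPGL n, ∃ m : ℕ, t * (mk W : PGLn n) ^ m = x := by
  induction x using QuotientGroup.induction_on with | H g => ?_
  obtain ⟨c, -, hc⟩ := mk_mem_centralizer_singleton_iff.mp hx
  rw [coe_conj_eq_smul_iff, hS] at hc
  obtain ⟨d, m, hd, rfl⟩ := exists_isDiag_mul_pow_of_mul_diagZeta hζ hW hc
  exact ⟨mk d, (mk_mem_diagTorusPGL_iff d).mpr hd, m, by rw [mk_mul, mk_pow]⟩

theorem centralizer_eq_closure (hζ : IsPrimitiveRoot ζ n)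
    (hS : (S : Matrix (Fin n) (Fin n) ℂ) = diagZeta n ζ)
    (hW : (W : Matrix (Fin n) (Fin n) ℂ) = cycleMat n) :
    centralizer {(mk S : PGLn n)} =
      Subgroup.closure ({x : PGLn n | ∃ d : GL (Fin n) ℂ,
          ((d : Matrix (Fin n) (Fin n) ℂ)).IsDiag ∧ mk d = x} ∪ {(mk W : PGLn n)}) := by
  refine le_antisymm (fun x hx => ?_) (closure_le _ |>.mpr ?_)
  · obtain ⟨t, ht, m, rfl⟩ := exists_mem_diagTorusPGL_mul_pow_eq hζ hS hW hx
    refine mul_mem ((Subgroup.closure_mono Set.subset_union_left) ht) (pow_mem ?_ m)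
    exact subset_closure (Set.mem_union_right _ rfl)
  · rintro x (hx | rfl)
    · exact diagTorusPGL_le_centralizer hS (subset_closure hx)
    · exact mk_cycle_mem_centralizer hζ hS hW

theorem centralizer_le_normalizer_diagTorusPGL (hζ : IsPrimitiveRoot ζ n)
    (hS : (S : Matrix (Fin n) (Fin n) ℂ) = diagZeta n ζ)
    (hW : (W : Matrix (Fin n) (Fin n) ℂ) = cycleMat n) :
    centralizer {(mk S : PGLn n)} ≤ normalizer (diagTorusPGL n : Set (PGLn n)) := by
  rw [centralizer_eq_closure hζ hS hW, closure_le]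
  rintro x (hx | rfl)
  · exact le_normalizer (subset_closure hx)
  · exact mk_cycle_mem_normalizer hW

theorem exists_centralizer_mulEquiv_semidirectProduct (hζ : IsPrimitiveRoot ζ n)
    (hS : (S : Matrix (Fin n) (Fin n) ℂ) = diagZeta n ζ)
    (hW : (W : Matrix (Fin n) (Fin n) ℂ) = cycleMat n) :
    ∃ φ : Multiplicative (ZMod n) →* MulAut (diagTorusPGL n),
      Nonempty (centralizer {(mk S : PGLn n)} ≃*
        (diagTorusPGL n ⋊[φ] Multiplicative (ZMod n))) := by
  set C := centralizer {(mk S : PGLn n)}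
  have hTC : diagTorusPGL n ≤ C := diagTorusPGL_le_centralizer hS
  have hZC : zpowers (mk W : PGLn n) ≤ C := zpowers_le.mpr (mk_cycle_mem_centralizer hζ hS hW)
  have : ((diagTorusPGL n).subgroupOf C).Normal :=
    (normal_subgroupOf_iff_le_normalizer hTC).mpr
      (centralizer_le_normalizer_diagTorusPGL hζ hS hW)
  have hcompl : ((diagTorusPGL n).subgroupOf C).IsComplement' ((zpowers (mk W)).subgroupOf C) :=
    isComplement'_subgroupOf (disjoint_diagTorusPGL_zpowers hW) hTC hZC fun x hx => by
      obtain ⟨t, ht, m, rfl⟩ := exists_mem_diagTorusPGL_mul_pow_eq hζ hS hW hx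
      exact ⟨t, ht, _, npow_mem_zpowers _ m, rfl⟩
  have hgen : ∀ x : zpowers (mk W : PGLn n), x ∈ zpowers ⟨mk W, mem_zpowers _⟩ := by
    rintro ⟨_, k, rfl⟩
    exact ⟨k, rfl⟩
  have hcard : Nat.card (zpowers (mk W : PGLn n)) = n :=
    (Nat.card_zpowers _).trans (orderOf_mk_cycle hW)
  exact ⟨_, ⟨(SemidirectProduct.mulEquivSubgroup hcompl).symm.trans
    (SemidirectProduct.congr' (subgroupOfEquivOfLe hTC)
      ((subgroupOfEquivOfLe hZC).trans (zmodMulEquivOfGenerator hgen hcard).symm))⟩⟩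

end ProjectiveCentralizer

/-- Let `n ≥ 1`, `ζ` a primitive `n`-th root of unity,
`s_n = diag(1, ζ, …, ζ^{n-1})` and `w_n` the `n`-cycle permutation matrix.  Then
`g ∈ GL_n(ℂ)` satisfies `g s_n g⁻¹ = λ s_n` for some `λ ∈ ℂˣ` iff `g = d·w_n^k` for some
invertible diagonal matrix `d` and some integer `k`.  In particular, the centralizer of
`s̄_n` in `PGL_n(ℂ)` is generated by the image of the diagonal torus together with `w̄_n`,
and is isomorphic to `T ⋊ ℤ/nℤ` where `T` is the image of the diagonal torus. -/
theorem stmt6 (n : ℕ) [NeZero n] (ζ : ℂ) (hζ : IsPrimitiveRoot ζ n)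
    (S W : GL (Fin n) ℂ)
    (hS : (S : Matrix (Fin n) (Fin n) ℂ) = diagZeta n ζ)
    (hW : (W : Matrix (Fin n) (Fin n) ℂ) = cycleMat n) :
    (∀ g : GL (Fin n) ℂ,
      (∃ lam : ℂ, lam ≠ 0 ∧
          ((g * S * g⁻¹ : GL (Fin n) ℂ) : Matrix (Fin n) (Fin n) ℂ)
            = lam • (S : Matrix (Fin n) (Fin n) ℂ))
        ↔ ∃ (dmat : GL (Fin n) ℂ) (k : ℤ),
            ((dmat : Matrix (Fin n) (Fin n) ℂ)).IsDiag ∧ g = dmat * W ^ k)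
    ∧ Subgroup.centralizer {(QuotientGroup.mk S : PGLn n)} =
        Subgroup.closure ({x : PGLn n | ∃ d : GL (Fin n) ℂ,
            ((d : Matrix (Fin n) (Fin n) ℂ)).IsDiag ∧ QuotientGroup.mk d = x}
          ∪ {(QuotientGroup.mk W : PGLn n)})
    ∧ ∃ φ : Multiplicative (ZMod n) →* MulAut ↥(diagTorusPGL n),
        Nonempty (↥(Subgroup.centralizer {(QuotientGroup.mk S : PGLn n)}) ≃*
          (↥(diagTorusPGL n) ⋊[φ] Multiplicative (ZMod n))) := by
  refine ⟨fun g => ⟨?_, ?_⟩, centralizer_eq_closure hζ hS hW,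
    exists_centralizer_mulEquiv_semidirectProduct hζ hS hW⟩
  · rintro ⟨c, -, hc⟩
    rw [GeneralLinearGroup.coe_conj_eq_smul_iff, hS] at hc
    obtain ⟨d, m, hd, rfl⟩ := exists_isDiag_mul_pow_of_mul_diagZeta hζ hW hc
    exact ⟨d, m, hd, by rw [zpow_natCast]⟩
  · rintro ⟨d, k, hd, rfl⟩
    rw [← GeneralLinearGroup.mk_mem_centralizer_singleton_iff, QuotientGroup.mk_mul,
      QuotientGroup.mk_zpow]
    exact mul_mem (diagTorusPGL_le_centralizer hS ((mk_mem_diagTorusPGL_iff d).mpr hd))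
      (zpow_mem (mk_cycle_mem_centralizer hζ hS hW) k)
end

section
/- Let n ≥ 1 and let λ be a partition of n with part i occurring r_i times. Then Γ_{SL}(λ) contains a pair (s,h) of commuting semisimple elements whose simultaneous centralizer {g ∈ Γ_{SL}(λ) : gs = sg and gh = hg} is finite if and only if λ = (n), i.e. λ has a single part equal to n. In that case Γ_{SL}((n)) = {z ∈ ℂ^× : z^n = 1} is the finite group of n-th roots of unity, and every pair of its elements has finite simultaneous centralizer. -/
/-- The homomorphism `(x_1, …, x_ℓ) ↦ ∏_i det(x_i)^i` on `∏_i GL_{r_i}(ℂ)`, where the index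
`i : Fin ℓ` stands for the part `i+1`. -/
noncomputable def detProdHom (ℓ : ℕ) (r : Fin ℓ → ℕ) :
    ((i : Fin ℓ) → GL (Fin (r i)) ℂ) →* ℂˣ :=
  ∏ i : Fin ℓ, ((powMonoidHom ((i : ℕ) + 1)).comp
    ((Matrix.GeneralLinearGroup.det).comp (Pi.evalMonoidHom (fun i => GL (Fin (r i)) ℂ) i)))

/-- `Γ_SL(λ) = {(x_1, …, x_ℓ) ∈ ∏_i GL_{r_i}(ℂ) : ∏_i det(x_i)^i = 1}`, the reductive part of
the centralizer in `SL_n(ℂ)` of a unipotent element of Jordan type `λ`. -/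
noncomputable def GammaSL (ℓ : ℕ) (r : Fin ℓ → ℕ) :
    Subgroup ((i : Fin ℓ) → GL (Fin (r i)) ℂ) :=
  (detProdHom ℓ r).ker

def IsSemisimpleSL (ℓ : ℕ) (r : Fin ℓ → ℕ) (x : (i : Fin ℓ) → GL (Fin (r i)) ℂ) : Prop :=
  ∀ i, ∃ g : GL (Fin (r i)) ℂ,
    ((g * x i * g⁻¹ : GL (Fin (r i)) ℂ) : Matrix (Fin (r i)) (Fin (r i)) ℂ).IsDiag

/-!
If two distinct parts `i ≠ j` occur, `Γ_SL(λ)` contains the infinite cyclic group generated by the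
central element that is `2^b` on the block `i` and `2^{-a}` on the block `j`, where `a` and `b`
are chosen so that the determinant condition holds. If a single part `i` occurs with
multiplicity `r_i ≥ 2`, the commuting blocks `s_i, h_i` both commute with some non-scalar matrix
`M`; for all but finitely many `t` the matrix `1 + tM` is invertible, and rescaling it to
determinant one yields infinitely many elements of the simultaneous centralizer. This leaves
`λ = (n)`, where the determinant of the unique `1 × 1` block identifies `Γ_SL(λ)` with `μ_n`.
-/

open Polynomial Matrix

theorem Pi.commute_mulSingle_iff {I : Type*} [DecidableEq I] {f : I → Type*}
    [∀ i, Monoid (f i)] {i : I} {x : f i} {g : ∀ i, f i} :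
    Commute (Pi.mulSingle i x) g ↔ Commute x (g i) := by
  refine ⟨fun h => (by simpa using congrFun h.eq i : x * g i = g i * x),
    fun h => funext fun k => ?_⟩
  rcases eq_or_ne k i with rfl | hk
  · simpa using h.eq
  · simp [Pi.mulSingle_eq_of_ne hk]

namespace Matrix

variable {n : Type*} [Fintype n] [DecidableEq n]

theorem eval_det_one_add_X_smul {R : Type*} [CommRing R] (M : Matrix n n R) (t : R) :
    (det (1 + (X : R[X]) • M.map C)).eval t = det (1 + t • M) := by
  simp [eval_det, ← smul_eq_mul_diagonal]

theorem finite_setOf_det_one_add_smul_eq_zero {R : Type*} [CommRing R] [IsDomain R]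
    (M : Matrix n n R) : {t : R | det (1 + t • M) = 0}.Finite := by
  have hq : det (1 + (X : R[X]) • M.map C) ≠ 0 := fun h => by
    simpa [h] using eval_det_one_add_X_smul M 0
  refine (finite_setOfPred_isRoot hq).subset fun t ht => ?_
  simpa [IsRoot, eval_det_one_add_X_smul] using ht

theorem exists_commute_forall_ne_smul_one {R : Type*} [CommRing R] [Nontrivial R] {i j : n}
    (hij : i ≠ j) {A B : Matrix n n R} (hAB : Commute A B) :
    ∃ M : Matrix n n R, Commute M A ∧ Commute M B ∧ ∀ c : R, M ≠ c • 1 := by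
  by_cases hA : ∀ a : R, A ≠ a • 1
  · exact ⟨A, Commute.refl A, hAB, hA⟩
  obtain ⟨a, rfl⟩ := not_forall_not.mp hA
  by_cases hB : ∀ b : R, B ≠ b • 1
  · exact ⟨B, hAB.symm, Commute.refl B, hB⟩
  obtain ⟨b, rfl⟩ := not_forall_not.mp hB
  refine ⟨single i j 1, (Commute.one_right _).smul_right a,
    (Commute.one_right _).smul_right b, fun c hc => ?_⟩
  simpa [hij] using congrFun (congrFun hc i) j

theorem eq_of_smul_one_add_smul_eq {K : Type*} [Field K] [Nonempty n] {M : Matrix n n K}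
    (hM : ∀ c : K, M ≠ c • 1) {z z' t t' : K} (hz : z ≠ 0)
    (h : z • (1 + t • M) = z' • (1 + t' • M)) : t = t' := by
  have hind : LinearIndependent K ![1, M] :=
    (LinearIndependent.pair_iff' one_ne_zero).mpr fun c hc => hM c hc.symm
  obtain ⟨rfl, hzt⟩ := hind.eq_of_pair (by simpa only [smul_add, smul_smul] using h)
  exact mul_left_cancel₀ hz hzt

theorem exists_smul_det_eq_one {K : Type*} [Field K] [IsAlgClosed K] [Nonempty n]
    {M : Matrix n n K} (hM : M.det ≠ 0) : ∃ z : K, (z • M).det = 1 := by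
  obtain ⟨z, hz⟩ := IsAlgClosed.exists_pow_nat_eq M.det⁻¹ (Fintype.card_pos (α := n))
  exact ⟨z, by rw [det_smul, hz, inv_mul_cancel₀ hM]⟩

theorem GeneralLinearGroup.det_injective {R : Type*} [CommRing R] [Unique n] :
    Function.Injective (GeneralLinearGroup.det : GL n R → Rˣ) := fun A B h => by
  ext a b
  simpa [Subsingleton.elim a default, Subsingleton.elim b default, det_unique] using
    congrArg Units.val h

end Matrix

section

variable {ℓ : ℕ} {r : Fin ℓ → ℕ}

theorem detProdHom_apply (g : (i : Fin ℓ) → GL (Fin (r i)) ℂ) :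
    detProdHom ℓ r g = ∏ i : Fin ℓ, GeneralLinearGroup.det (g i) ^ ((i : ℕ) + 1) := by
  rw [detProdHom, MonoidHom.finsetProd_apply]
  rfl

theorem detProdHom_mulSingle (i : Fin ℓ) (x : GL (Fin (r i)) ℂ) :
    detProdHom ℓ r (Pi.mulSingle i x) = GeneralLinearGroup.det x ^ ((i : ℕ) + 1) := by
  rw [detProdHom_apply, Finset.prod_eq_single i (by simp_all) (by simp), Pi.mulSingle_eq_same]

theorem detProdHom_eq_det_pow {i : Fin ℓ} (hr : ∀ j, j ≠ i → r j = 0)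
    (g : (i : Fin ℓ) → GL (Fin (r i)) ℂ) :
    detProdHom ℓ r g = GeneralLinearGroup.det (g i) ^ ((i : ℕ) + 1) := by
  refine (detProdHom_apply g).trans (Finset.prod_eq_single i (fun j _ hj => ?_) (by simp))
  have : IsEmpty (Fin (r j)) := by rw [hr j hj]; infer_instance
  rw [Subsingleton.elim (g j) 1, map_one, one_pow]

theorem isSemisimpleSL_one : IsSemisimpleSL ℓ r 1 :=
  fun _ => ⟨1, by simp⟩

def simultaneousCentralizer (ℓ : ℕ) (r : Fin ℓ → ℕ) (s h : (i : Fin ℓ) → GL (Fin (r i)) ℂ) :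
    Set ((i : Fin ℓ) → GL (Fin (r i)) ℂ) :=
  {g | g ∈ GammaSL ℓ r ∧ g * s = s * g ∧ g * h = h * g}

theorem mulSingle_scalar_mem_center (i : Fin ℓ) (u : ℂˣ) :
    Pi.mulSingle i (GeneralLinearGroup.scalar (Fin (r i)) u) ∈
      Subgroup.center ((i : Fin ℓ) → GL (Fin (r i)) ℂ) :=
  Subgroup.mem_center_iff.mpr fun g =>
    (Pi.commute_mulSingle_iff (g := g).mpr (GeneralLinearGroup.scalar_commute u (g i))).symm

theorem simultaneousCentralizer_infinite_of_ne {i j : Fin ℓ} (hij : i ≠ j) (hri : r i ≠ 0)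
    (hrj : r j ≠ 0) (s h : (i : Fin ℓ) → GL (Fin (r i)) ℂ) :
    (simultaneousCentralizer ℓ r s h).Infinite := by
  set a := ((i : ℕ) + 1) * r i
  set b := ((j : ℕ) + 1) * r j
  set u : ℂˣ := Units.mk0 2 two_ne_zero
  -- the two blocks contribute `u ^ (b * a)` and `u⁻¹ ^ (a * b)` to `detProdHom`
  set g : (k : Fin ℓ) → GL (Fin (r k)) ℂ :=
    Pi.mulSingle i (GeneralLinearGroup.scalar (Fin (r i)) (u ^ b)) *
      Pi.mulSingle j (GeneralLinearGroup.scalar (Fin (r j)) (u ^ a)⁻¹)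
  have hgΓ : g ∈ GammaSL ℓ r := by
    rw [GammaSL, MonoidHom.mem_ker, map_mul, detProdHom_mulSingle, detProdHom_mulSingle,
      GeneralLinearGroup.det_scalar, GeneralLinearGroup.det_scalar, Fintype.card_fin,
      Fintype.card_fin, inv_pow, inv_pow, ← pow_mul, ← pow_mul, ← pow_mul, ← pow_mul,
      mul_inv_eq_one]
    congr 1
    ring
  have hgZ : g ∈ Subgroup.center _ :=
    mul_mem (mulSingle_scalar_mem_center i _) (mulSingle_scalar_mem_center j _)
  have hinj : Function.Injective (g ^ · : ℕ → _) := by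
    intro m m' hm
    have := congrArg (fun x => (GeneralLinearGroup.det (x i) : ℂ)) hm
    simp only [g, u, Pi.pow_apply, Pi.mul_apply, Pi.mulSingle_eq_same, Pi.mulSingle_eq_of_ne hij,
      mul_one, map_pow, GeneralLinearGroup.det_scalar, Fintype.card_fin, Units.val_pow_eq_pow_val,
      Units.val_mk0, ← pow_mul] at this
    have hexp : r i * b * m = r i * b * m' := by
      simpa only [mul_assoc] using Nat.pow_right_injective le_rfl (by exact_mod_cast this)
    exact Nat.eq_of_mul_eq_mul_left (by positivity) hexp
  refine Set.infinite_of_injective_forall_mem hinj fun m => ⟨pow_mem hgΓ m, ?_, ?_⟩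
  · exact (Subgroup.mem_center_iff.mp (pow_mem hgZ m) s).symm
  · exact (Subgroup.mem_center_iff.mp (pow_mem hgZ m) h).symm

theorem simultaneousCentralizer_infinite_of_two_le {i : Fin ℓ} (hri : 2 ≤ r i)
    {s h : (i : Fin ℓ) → GL (Fin (r i)) ℂ} (hsh : Commute s h) :
    (simultaneousCentralizer ℓ r s h).Infinite := by
  have : Nonempty (Fin (r i)) := ⟨⟨0, by omega⟩⟩
  have hshi : Commute (s i) (h i) := congrFun hsh.eq i
  obtain ⟨M, hMs, hMh, hM⟩ := exists_commute_forall_ne_smul_one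
    (i := (⟨0, by omega⟩ : Fin (r i))) (j := ⟨1, by omega⟩) (by simp) hshi.units_val
  set T := {t : ℂ | det (1 + t • M) = 0}ᶜ
  have : Infinite T := (finite_setOf_det_one_add_smul_eq_zero M).infinite_compl.to_subtype
  choose z hz using fun t : T => exists_smul_det_eq_one t.2
  have hz0 : ∀ t, z t ≠ 0 := fun t h0 => by
    simpa [h0, det_zero] using hz t
  let G : T → SpecialLinearGroup (Fin (r i)) ℂ := fun t => ⟨z t • (1 + (t : ℂ) • M), hz t⟩
  have hGcomm : ∀ t x, Commute M x → Commute (z t • (1 + (t : ℂ) • M)) x :=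
    fun t x hx => ((Commute.one_left x).add_left (hx.smul_left _)).smul_left _
  have hinj : Function.Injective fun t =>
      (Pi.mulSingle i (G t : GL (Fin (r i)) ℂ) : (k : Fin ℓ) → GL (Fin (r k)) ℂ) := by
    intro t t' htt
    have hGG := congrArg (fun A : GL (Fin (r i)) ℂ => (A : Matrix (Fin (r i)) (Fin (r i)) ℂ))
      (Pi.mulSingle_injective i htt)
    exact Subtype.ext (eq_of_smul_one_add_smul_eq hM (hz0 t) hGG)
  refine Set.infinite_of_injective_forall_mem hinj fun t => ⟨?_, ?_, ?_⟩
  · simp [GammaSL, detProdHom_mulSingle]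
  · exact Pi.commute_mulSingle_iff.mpr (Commute.units_val_iff.mp (hGcomm t _ hMs))
  · exact Pi.commute_mulSingle_iff.mpr (Commute.units_val_iff.mp (hGcomm t _ hMh))

theorem exists_single_part_of_simultaneousCentralizer_finite {n : ℕ} (hn1 : 1 ≤ n)
    (hn : ∑ i : Fin ℓ, ((i : ℕ) + 1) * r i = n) {s h : (i : Fin ℓ) → GL (Fin (r i)) ℂ}
    (hsh : Commute s h) (hfin : (simultaneousCentralizer ℓ r s h).Finite) :
    ∃ i : Fin ℓ, (i : ℕ) + 1 = n ∧ r i = 1 ∧ ∀ j : Fin ℓ, j ≠ i → r j = 0 := by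
  obtain ⟨i, hi⟩ : ∃ i, r i ≠ 0 := by
    by_contra! h0
    simp [h0] at hn
    omega
  have hr : ∀ j, j ≠ i → r j = 0 := fun j hj => by
    by_contra hj0
    exact simultaneousCentralizer_infinite_of_ne hj hj0 hi s h hfin
  have hri : r i = 1 := by
    by_contra
    exact simultaneousCentralizer_infinite_of_two_le (i := i) (by omega) hsh hfin
  refine ⟨i, ?_, hri, hr⟩
  rw [← hn, Finset.sum_eq_single i (fun j _ hj => by rw [hr j hj, mul_zero]) (by simp), hri,
    mul_one]

noncomputable def GammaSL.mulEquivRootsOfUnity {i : Fin ℓ} (hri : r i = 1)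
    (hr : ∀ j, j ≠ i → r j = 0) : GammaSL ℓ r ≃* rootsOfUnity ((i : ℕ) + 1) ℂ :=
  have : Unique (Fin (r i)) := by rw [hri]; infer_instance
  let ψ := GeneralLinearGroup.det.comp (Pi.evalMonoidHom (fun k => GL (Fin (r k)) ℂ) i)
  have hψinj : Function.Injective ψ := fun g g' hg => funext fun j => by
    rcases eq_or_ne j i with rfl | hj
    · exact GeneralLinearGroup.det_injective hg
    · have : IsEmpty (Fin (r j)) := by rw [hr j hj]; infer_instance
      exact Subsingleton.elim _ _
  have hψsurj : Function.Surjective ψ := fun u => by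
    obtain ⟨A, hA⟩ := GeneralLinearGroup.det_surjective (n := Fin (r i)) u
    exact ⟨Pi.mulSingle i A, by simpa [ψ] using hA⟩
  have hΓ : GammaSL ℓ r = (rootsOfUnity ((i : ℕ) + 1) ℂ).comap ψ := by
    ext g
    rw [GammaSL, MonoidHom.mem_ker, detProdHom_eq_det_pow hr, Subgroup.mem_comap, mem_rootsOfUnity]
    rfl
  ((GammaSL ℓ r).equivMapOfInjective ψ hψinj).trans
    (MulEquiv.subgroupCongr (by rw [hΓ, Subgroup.map_comap_eq_self_of_surjective hψsurj]))

end

/-- Let `λ` be a partition of `n` (with `n ≥ 1`) with part `i` occurring `r_i`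
times.  Then `Γ_SL(λ)` contains a pair `(s,h)` of commuting semisimple elements whose
simultaneous centralizer `{g ∈ Γ_SL(λ) : gs = sg and gh = hg}` is finite if and only if
`λ = (n)`, i.e. `λ` has a single part equal to `n`.  In that case `Γ_SL((n))` is finite,
isomorphic to the group of `n`-th roots of unity, and every pair of its elements has finite
simultaneous centralizer. -/
theorem stmt10 (ℓ n : ℕ) (hn1 : 1 ≤ n) (r : Fin ℓ → ℕ)
    (hn : ∑ i : Fin ℓ, ((i : ℕ) + 1) * r i = n) :
    ((∃ s h : (i : Fin ℓ) → GL (Fin (r i)) ℂ,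
        s ∈ GammaSL ℓ r ∧ h ∈ GammaSL ℓ r ∧
        IsSemisimpleSL ℓ r s ∧ IsSemisimpleSL ℓ r h ∧ s * h = h * s ∧
        Set.Finite {g : (i : Fin ℓ) → GL (Fin (r i)) ℂ |
          g ∈ GammaSL ℓ r ∧ g * s = s * g ∧ g * h = h * g})
      ↔ ∃ i : Fin ℓ, (i : ℕ) + 1 = n ∧ r i = 1 ∧ ∀ j : Fin ℓ, j ≠ i → r j = 0)
    ∧ ((∃ i : Fin ℓ, (i : ℕ) + 1 = n ∧ r i = 1 ∧ ∀ j : Fin ℓ, j ≠ i → r j = 0) →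
        (Finite ↥(GammaSL ℓ r) ∧
         Nonempty (↥(GammaSL ℓ r) ≃* ↥(rootsOfUnity n ℂ)) ∧
         ∀ s h : (i : Fin ℓ) → GL (Fin (r i)) ℂ, s ∈ GammaSL ℓ r → h ∈ GammaSL ℓ r →
           Set.Finite {g : (i : Fin ℓ) → GL (Fin (r i)) ℂ |
             g ∈ GammaSL ℓ r ∧ g * s = s * g ∧ g * h = h * g})) := by
  have hsingle : (∃ i : Fin ℓ, (i : ℕ) + 1 = n ∧ r i = 1 ∧ ∀ j : Fin ℓ, j ≠ i → r j = 0) →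
      Finite (GammaSL ℓ r) ∧ Nonempty (GammaSL ℓ r ≃* rootsOfUnity n ℂ) ∧
        ∀ s h, s ∈ GammaSL ℓ r → h ∈ GammaSL ℓ r → (simultaneousCentralizer ℓ r s h).Finite := by
    rintro ⟨i, rfl, hri, hr⟩
    let e := GammaSL.mulEquivRootsOfUnity hri hr
    have : Finite (GammaSL ℓ r) := Finite.of_equiv _ e.symm.toEquiv
    exact ⟨this, ⟨e⟩, fun s h _ _ => (Set.toFinite (GammaSL ℓ r : Set _)).subset fun g hg => hg.1⟩
  refine ⟨⟨fun ⟨s, h, _, _, _, _, hsh, hfin⟩ =>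
    exists_single_part_of_simultaneousCentralizer_finite hn1 hn hsh hfin, fun hpart => ?_⟩, hsingle⟩
  exact ⟨1, 1, one_mem _, one_mem _, isSemisimpleSL_one, isSemisimpleSL_one, rfl,
    (hsingle hpart).2.2 1 1 (one_mem _) (one_mem _)⟩
end

section
/- Let d, m ≥ 1 and n = dm. The elliptic elements of G = (S_m)^d ⋊ ℤ/dℤ (those with no nonzero fixed vector in V) form exactly φ(d) conjugacy classes of G, where φ is Euler's totient function, with representatives (w_m, 1, …, 1)·η as η ranges over the elements of ℤ/dℤ of order d. -/
/-!
A vector fixed by `g` is a function constant on the orbits of `⟨g⟩`, so `g` is elliptic exactly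
when `⟨g⟩` acts transitively on the `d·m` coordinates. An element of `G` moves block `i` to block
`i + a`; transitivity forces the shift `a` to generate `ℤ/dℤ`. Conversely, for `η` of order `d`
the element `(w_m, 1, …, 1)·η` is transitive: it runs through the blocks, and its `d`-th power acts
on block `0` as the `m`-cycle `w_m`.

Two transitive elements `g₁, g₂` with the same shift `a` are `dm`-cycles, so they are conjugate in
`S_{dm}` by some `c` which may be chosen to fix a base point `x₀` in block `0`. Then `c` sends
`g₁ᵏ x₀` to `g₂ᵏ x₀`, both in block `k·a`, so `c` preserves every block and lies in `G`. As
conjugation in `G` preserves the shift, the classes of elliptic elements correspond to the `φ(d)`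
generators of `ℤ/dℤ`.
-/

/-- The wreath product `(S_m)^d ⋊ ℤ/dℤ`, realized concretely as the subgroup of permutations
of the `n = d·m` coordinates (indexed by pairs `(i,j)` with `i : ZMod d` the block index and
`j : Fin m` the position within the block) that shift the block index by a constant amount. -/
def wrG (d m : ℕ) : Subgroup (Equiv.Perm (ZMod d × Fin m)) where
  carrier := {π | ∃ a : ZMod d, ∀ p : ZMod d × Fin m, (π p).1 = p.1 + a}
  one_mem' := ⟨0, fun p => by simp⟩
  mul_mem' := by
    rintro π σ ⟨a, ha⟩ ⟨b, hb⟩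
    refine ⟨b + a, fun p => ?_⟩
    have : (π * σ) p = π (σ p) := rfl
    rw [this, ha, hb, add_assoc]
  inv_mem' := by
    rintro π ⟨a, ha⟩
    refine ⟨-a, fun p => ?_⟩
    have h1 := ha (π⁻¹ p)
    rw [show π (π⁻¹ p) = p from (Equiv.eq_symm_apply π).mp rfl] at h1
    rw [h1, add_neg_cancel_right]

/-- The element `(σ_1, …, σ_d)·ξ^a` of the wreath product `(S_m)^d ⋊ ℤ/dℤ` (here with blocks
indexed by `ZMod d`): it sends the coordinate `(i, j)` to `(i + a, σ_{i+a} j)`, i.e. first `ξ^a`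
shifts every block up by `a`, and then `σ_k` permutes the coordinates within the `k`-th block. -/
def wrElt (d m : ℕ) (σ : ZMod d → Equiv.Perm (Fin m)) (a : ZMod d) :
    Equiv.Perm (ZMod d × Fin m) where
  toFun p := (p.1 + a, σ (p.1 + a) p.2)
  invFun p := (p.1 - a, (σ p.1)⁻¹ p.2)
  left_inv p := by simp
  right_inv p := by simp

/-- An element `g` of the wreath product is elliptic if it has no nonzero fixed vector in
`V = {x ∈ ℂ^n : x_1 + ⋯ + x_n = 0}` (the action being by permutation of coordinates). -/
def IsElliptic (d m : ℕ) [NeZero d] (g : Equiv.Perm (ZMod d × Fin m)) : Prop :=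
  ∀ v : ZMod d × Fin m → ℂ,
    (∑ p : ZMod d × Fin m, v p = 0) → (∀ p, v (g p) = v p) → v = 0

open Finset

namespace Equiv.Perm

variable {α : Type*}

theorem forall_invariant_eq_zero_iff_forall_sameCycle {K : Type*} [Field K] [CharZero K]
    [Fintype α] (g : Perm α) :
    (∀ v : α → K, ∑ p, v p = 0 → (∀ p, v (g p) = v p) → v = 0) ↔
      ∀ x y, g.SameCycle x y := by
  classical
  constructor
  · intro h x y
    by_contra hxy
    let O : Finset α := {p | g.SameCycle x p}
    let v : α → K := fun p => (if g.SameCycle x p then (Fintype.card α : K) else 0) - #O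
    have hsum : ∑ p, v p = 0 := by
      simp [v, Finset.sum_sub_distrib, Finset.sum_ite, O, mul_comm]
    have hinv : ∀ p, v (g p) = v p := fun p => by simp only [v, sameCycle_apply_right]
    have hvy : v y = -#O := by simp [v, hxy]
    have hO : x ∈ O := by simp [O, SameCycle.refl]
    have := congrFun (h v hsum hinv) y
    rw [hvy, Pi.zero_apply, neg_eq_zero, Nat.cast_eq_zero] at this
    exact Finset.card_ne_zero_of_mem hO this
  · intro h v hsum hv
    funext x
    have hconst : ∀ y, v y = v x := fun y => by
      obtain ⟨n, rfl⟩ := (h x y).exists_nat_pow_eq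
      rw [coe_pow, ← Function.comp_apply (f := v), Function.iterate_invariant (funext hv)]
    rw [Finset.sum_congr rfl fun y _ => hconst y, Finset.sum_const, Finset.card_univ,
      nsmul_eq_mul, mul_eq_zero, Nat.cast_eq_zero] at hsum
    have : Nonempty α := ⟨x⟩
    exact hsum.resolve_left Fintype.card_ne_zero

theorem exists_conj_eq_and_apply_eq_of_forall_sameCycle [Finite α] {g h : Perm α}
    (hg : ∀ x y, g.SameCycle x y) (hh : ∀ x y, h.SameCycle x y) (x : α) :
    ∃ c : Perm α, c * g * c⁻¹ = h ∧ c x = x := by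
  classical
  have : Fintype α := Fintype.ofFinite α
  rcases subsingleton_or_nontrivial α with hα | hα
  · exact ⟨1, Subsingleton.elim _ _, Subsingleton.elim _ _⟩
  have hcycle : ∀ f : Perm α, (∀ x y, f.SameCycle x y) → f.IsCycle ∧ f.support = univ := by
    intro f hf
    have hmove : ∀ x, f x ≠ x := fun x hx =>
      let ⟨y, hy⟩ := exists_ne x
      hy ((hf x y).eq_of_left hx).symm
    exact ⟨⟨x, hmove x, fun y _ => hf x y⟩, by ext y; simp [hmove y]⟩
  obtain ⟨hgc, hgs⟩ := hcycle g hg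
  obtain ⟨hhc, hhs⟩ := hcycle h hh
  obtain ⟨c, hc⟩ := isConj_iff.mp (hgc.isConj hhc (by rw [hgs, hhs]))
  obtain ⟨n, hn⟩ := (hh (c x) x).exists_nat_pow_eq
  refine ⟨h ^ n * c, ?_, by rwa [mul_apply]⟩
  calc h ^ n * c * g * (h ^ n * c)⁻¹ = h ^ n * (c * g * c⁻¹) * (h ^ n)⁻¹ := by group
    _ = h := by rw [hc, ← pow_succ, pow_succ', mul_inv_cancel_right]

end Equiv.Perm

section Shift

open Equiv

variable {A β : Type*}

def ShiftsBy [Add A] (g : Perm (A × β)) (a : A) : Prop := ∀ p, (g p).1 = p.1 + a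

namespace ShiftsBy

variable [AddGroup A] {g h : Perm (A × β)} {a b : A}

theorem mul (hg : ShiftsBy g a) (hh : ShiftsBy h b) : ShiftsBy (g * h) (b + a) := fun p => by
  rw [Perm.mul_apply, hg, hh, add_assoc]

theorem inv (hg : ShiftsBy g a) : ShiftsBy g⁻¹ (-a) := fun p => by
  rw [eq_add_neg_iff_add_eq, ← hg, show g (g⁻¹ p) = p from g.apply_symm_apply p]

theorem pow (hg : ShiftsBy g a) (n : ℕ) : ShiftsBy (g ^ n) (n • a) := by
  induction n with
  | zero => intro p; simp
  | succ n ih => rw [pow_succ, succ_nsmul']; exact ih.mul hg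

theorem unique [Nonempty β] (ha : ShiftsBy g a) (hb : ShiftsBy g b) : a = b := by
  obtain ⟨j⟩ := ‹Nonempty β›
  simpa using (ha (0, j)).symm.trans (hb (0, j))

theorem conj {A : Type*} [AddCommGroup A] {g c : Perm (A × β)} {a b : A} (hc : ShiftsBy c b)
    (hg : ShiftsBy g a) : ShiftsBy (c * g * c⁻¹) a := by
  simpa using (hc.mul hg).mul hc.inv

theorem forall_sameCycle (hg : ShiftsBy g a) (hgen : ∀ i : A, ∃ k : ℕ, k • a = i)
    (hzero : ∀ j j' : β, g.SameCycle (0, j) (0, j')) : ∀ p q, g.SameCycle p q := by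
  have hblock : ∀ (k : ℕ) (j j' : β), g.SameCycle (0, j) (k • a, j') := by
    intro k
    induction k with
    | zero => simpa using hzero
    | succ k ih =>
      intro j j'
      have hprev : (g⁻¹ ((k + 1) • a, j')).1 = k • a := by
        rw [hg.inv, succ_nsmul, add_neg_cancel_right]
      rw [← show g (g⁻¹ ((k + 1) • a, j')) = _ from g.apply_symm_apply _,
        Perm.sameCycle_apply_right, ← Prod.mk.eta (p := g⁻¹ _), hprev]
      exact ih j _
  rintro ⟨i, j⟩ ⟨i', j'⟩
  obtain ⟨k, rfl⟩ := hgen i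
  obtain ⟨k', rfl⟩ := hgen i'
  exact (hblock k j j).symm.trans (hblock k' j j')

theorem addOrderOf_eq_card [Finite A] [Finite β] [Nonempty β] (hg : ShiftsBy g a)
    (htrans : ∀ p q, g.SameCycle p q) : addOrderOf a = Nat.card A := by
  obtain ⟨j⟩ := ‹Nonempty β›
  refine addOrderOf_eq_card_of_forall_mem_zmultiples fun i => ?_
  obtain ⟨k, hk⟩ := (htrans (0, j) (i, j)).exists_nat_pow_eq
  have := (hg.pow k (0, j))
  rw [hk, zero_add] at this
  exact (show i = k • a from this) ▸ AddSubgroup.nsmul_mem_zmultiples a k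

theorem exists_conj_iff {A : Type*} [AddCommGroup A] [Finite A] [Finite β] [Nonempty β]
    {g₁ g₂ : Perm (A × β)} {a₁ a₂ : A} (h₁ : ShiftsBy g₁ a₁) (h₂ : ShiftsBy g₂ a₂)
    (t₁ : ∀ p q, g₁.SameCycle p q) (t₂ : ∀ p q, g₂.SameCycle p q) :
    (∃ c, (∃ b, ShiftsBy c b) ∧ c * g₁ * c⁻¹ = g₂) ↔ a₁ = a₂ := by
  constructor
  · rintro ⟨c, ⟨b, hc⟩, rfl⟩
    exact (hc.conj h₁).unique h₂
  rintro rfl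
  obtain ⟨j⟩ := ‹Nonempty β›
  obtain ⟨c, hc, hx⟩ := Perm.exists_conj_eq_and_apply_eq_of_forall_sameCycle t₁ t₂ (0, j)
  refine ⟨c, ⟨0, fun p => ?_⟩, hc⟩
  obtain ⟨k, rfl⟩ := (t₁ (0, j) p).exists_nat_pow_eq
  have hck : c ((g₁ ^ k) (0, j)) = (g₂ ^ k) (0, j) := by
    rw [← hc, conj_pow, Perm.mul_apply, Perm.mul_apply, Perm.inv_eq_iff_eq.mpr hx.symm]
  rw [hck, h₂.pow, h₁.pow, add_zero]

end ShiftsBy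

end Shift

theorem exists_nsmul_eq_of_addOrderOf_eq_card {A : Type*} [AddGroup A] [Finite A] {a : A}
    (h : addOrderOf a = Nat.card A) (x : A) : ∃ k : ℕ, k • a = x := by
  have htop : AddSubgroup.zmultiples a = ⊤ :=
    AddSubgroup.eq_top_of_card_eq _ ((Nat.card_zmultiples a).trans h)
  exact (AddSubmonoid.mem_multiples_iff _ _).mp
    (mem_multiples_iff_mem_zmultiples.mpr (htop ▸ AddSubgroup.mem_top x))

theorem ZMod.natCard_addOrderOf_eq_totient (d : ℕ) [NeZero d] :
    Nat.card {η : ZMod d // addOrderOf η = d} = d.totient := by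
  classical
  rw [Nat.card_eq_fintype_card, Fintype.card_subtype]
  exact IsAddCyclic.card_addOrderOf_eq_totient (by rw [ZMod.card])

theorem Nat.card_quot_eq_of_surjective {X Y : Type*} {r : X → X → Prop} (f : X → Y)
    (hf : Function.Surjective f) (hr : ∀ x y, r x y ↔ f x = f y) :
    Nat.card (Quot r) = Nat.card Y :=
  Nat.card_congr ((Quot.congrRight hr).trans (Setoid.quotientKerEquivOfSurjective f hf))

section Representative

open Equiv

variable {d m : ℕ}

theorem shiftsBy_wrElt (σ : ZMod d → Perm (Fin m)) (a : ZMod d) :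
    ShiftsBy (wrElt d m σ a) a := fun _ => rfl

theorem forall_sameCycle_wrElt [NeZero d] {wm : Perm (Fin m)}
    (hwm : ∀ j j', ∃ k : ℕ, (wm ^ k) j = j') {η : ZMod d} (hη : addOrderOf η = d) :
    ∀ p q, (wrElt d m (fun i => if i = 0 then wm else 1) η).SameCycle p q := by
  set r := wrElt d m (fun i => if i = 0 then wm else 1) η
  have hη' : addOrderOf η = Nat.card (ZMod d) := by rw [hη, Nat.card_zmod]
  have hpow : ∀ k < d, ∀ j, (r ^ k) (0, j) = (k • η, j) := by
    intro k
    induction k with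
    | zero => simp
    | succ k ih =>
      intro hk j
      have hne : (k + 1) • η ≠ 0 := fun h0 =>
        absurd (addOrderOf_le_of_nsmul_eq_zero k.succ_pos h0) (by omega)
      rw [pow_succ', Perm.mul_apply, ih (by omega)]
      show ((k • η + η), (if k • η + η = 0 then wm else 1) j) = _
      rw [← succ_nsmul, if_neg hne, Perm.one_apply]
  have hstep : ∀ j, r.SameCycle (0, j) (0, wm j) := by
    intro j
    obtain ⟨e, he⟩ : ∃ e, d = e + 1 := Nat.exists_eq_succ_of_ne_zero (NeZero.ne d)
    have hwrap : e • η + η = 0 := by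
      rw [← succ_nsmul, show e + 1 = addOrderOf η by omega, addOrderOf_nsmul_eq_zero]
    have hlast : r (e • η, j) = (0, wm j) := by
      show ((e • η + η), (if e • η + η = 0 then wm else 1) j) = _
      rw [hwrap, if_pos rfl]
    rw [← hlast, ← hpow e (by omega), Perm.sameCycle_apply_right, Perm.sameCycle_pow_right]
  have hzero : ∀ j j', r.SameCycle (0, j) (0, j') := by
    intro j j'
    obtain ⟨k, rfl⟩ := hwm j j'
    induction k with
    | zero => exact Perm.SameCycle.refl _ _
    | succ k ih => rw [pow_succ', Perm.mul_apply]; exact ih.trans (hstep _)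
  exact (shiftsBy_wrElt _ η).forall_sameCycle (exists_nsmul_eq_of_addOrderOf_eq_card hη') hzero

end Representative

section Elliptic

open Equiv

variable {d m : ℕ} [NeZero d]

theorem isElliptic_iff_forall_sameCycle (g : Perm (ZMod d × Fin m)) :
    IsElliptic d m g ↔ ∀ p q, g.SameCycle p q :=
  g.forall_invariant_eq_zero_iff_forall_sameCycle

theorem ShiftsBy.addOrderOf_eq_of_isElliptic [Nonempty (Fin m)] {g : Perm (ZMod d × Fin m)}
    {a : ZMod d} (ha : ShiftsBy g a) (hg : IsElliptic d m g) : addOrderOf a = d := by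
  rw [ha.addOrderOf_eq_card ((isElliptic_iff_forall_sameCycle g).mp hg), Nat.card_zmod]

theorem exists_mem_wrG_conj_eq_iff [Nonempty (Fin m)] {g₁ g₂ : Perm (ZMod d × Fin m)}
    {a₁ a₂ : ZMod d} (h₁ : ShiftsBy g₁ a₁) (h₂ : ShiftsBy g₂ a₂) (e₁ : IsElliptic d m g₁)
    (e₂ : IsElliptic d m g₂) : (∃ c ∈ wrG d m, c * g₁ * c⁻¹ = g₂) ↔ a₁ = a₂ :=
  h₁.exists_conj_iff h₂ ((isElliptic_iff_forall_sameCycle g₁).mp e₁)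
    ((isElliptic_iff_forall_sameCycle g₂).mp e₂)

theorem isElliptic_wrElt {wm : Perm (Fin m)} (hwm : ∀ j j', ∃ k : ℕ, (wm ^ k) j = j')
    {η : ZMod d} (hη : addOrderOf η = d) :
    IsElliptic d m (wrElt d m (fun i => if i = 0 then wm else 1) η) :=
  (isElliptic_iff_forall_sameCycle _).mpr (forall_sameCycle_wrElt hwm hη)

end Elliptic

theorem stmt13_general (d m : ℕ) [NeZero d] (hm : 1 ≤ m)
    (wm : Equiv.Perm (Fin m)) (hwm : ∀ a b : Fin m, ∃ k : ℕ, (wm ^ k) a = b) :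
    Nat.card (Quot (fun g₁ g₂ :
        {g : Equiv.Perm (ZMod d × Fin m) // g ∈ wrG d m ∧ IsElliptic d m g} =>
        ∃ c ∈ wrG d m, c * g₁.1 * c⁻¹ = g₂.1)) = Nat.totient d
    ∧ (∀ η : ZMod d, addOrderOf η = d →
        wrElt d m (fun i => if i = 0 then wm else 1) η ∈ wrG d m ∧
        IsElliptic d m (wrElt d m (fun i => if i = 0 then wm else 1) η))
    ∧ (∀ g : Equiv.Perm (ZMod d × Fin m), g ∈ wrG d m → IsElliptic d m g →
        ∃! η : ZMod d, addOrderOf η = d ∧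
          ∃ c ∈ wrG d m,
            c * (wrElt d m (fun i => if i = 0 then wm else 1) η) * c⁻¹ = g) := by
  have : Nonempty (Fin m) := ⟨⟨0, hm⟩⟩
  have hrep (η : ZMod d) (hη : addOrderOf η = d) :
      wrElt d m (fun i => if i = 0 then wm else 1) η ∈ wrG d m ∧
        IsElliptic d m (wrElt d m (fun i => if i = 0 then wm else 1) η) :=
    ⟨⟨η, shiftsBy_wrElt _ η⟩, isElliptic_wrElt hwm hη⟩
  refine ⟨?_, hrep, fun g ⟨a, ha⟩ he => ?_⟩
  · let shift (g : {g : Equiv.Perm (ZMod d × Fin m) // g ∈ wrG d m ∧ IsElliptic d m g}) :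
        {η : ZMod d // addOrderOf η = d} :=
      ⟨g.2.1.choose, ShiftsBy.addOrderOf_eq_of_isElliptic g.2.1.choose_spec g.2.2⟩
    refine (Nat.card_quot_eq_of_surjective shift ?_ fun g₁ g₂ => ?_).trans
      (ZMod.natCard_addOrderOf_eq_totient d)
    · rintro ⟨η, hη⟩
      exact ⟨⟨_, hrep η hη⟩, Subtype.ext
        (ShiftsBy.unique (hrep η hη).1.choose_spec (shiftsBy_wrElt _ η))⟩
    · rw [Subtype.ext_iff]
      exact exists_mem_wrG_conj_eq_iff g₁.2.1.choose_spec g₂.2.1.choose_spec g₁.2.2 g₂.2.2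
  · have hconj (η : ZMod d) (hη : addOrderOf η = d) :=
      exists_mem_wrG_conj_eq_iff (shiftsBy_wrElt _ η) ha (hrep η hη).2 he
    have hord := ShiftsBy.addOrderOf_eq_of_isElliptic ha he
    exact ⟨a, ⟨hord, (hconj a hord).mpr rfl⟩, fun η ⟨hη, hc⟩ => (hconj η hη).mp hc⟩

/-- Let `d, m ≥ 1` and `n = dm`.  The elliptic elements of
`G = (S_m)^d ⋊ ℤ/dℤ` (those with no nonzero fixed vector in `V`) form exactly `φ(d)`
conjugacy classes of `G` (`φ` = Euler's totient function), with representatives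
`(w_m, 1, …, 1)·η` as `η` ranges over the elements of `ℤ/dℤ` of order `d`: every such
representative is elliptic, and every elliptic element of `G` is conjugate in `G` to the
representative for exactly one such `η`. -/
theorem stmt13 (d m : ℕ) [NeZero d] (hd : 1 ≤ d) (hm : 1 ≤ m)
    (wm : Equiv.Perm (Fin m)) (hwm : ∀ a b : Fin m, ∃ k : ℕ, (wm ^ k) a = b) :
    Nat.card (Quot (fun g₁ g₂ :
        {g : Equiv.Perm (ZMod d × Fin m) // g ∈ wrG d m ∧ IsElliptic d m g} =>
        ∃ c ∈ wrG d m, c * g₁.1 * c⁻¹ = g₂.1)) = Nat.totient d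
    ∧ (∀ η : ZMod d, addOrderOf η = d →
        wrElt d m (fun i => if i = 0 then wm else 1) η ∈ wrG d m ∧
        IsElliptic d m (wrElt d m (fun i => if i = 0 then wm else 1) η))
    ∧ (∀ g : Equiv.Perm (ZMod d × Fin m), g ∈ wrG d m → IsElliptic d m g →
        ∃! η : ZMod d, addOrderOf η = d ∧
          ∃ c ∈ wrG d m,
            c * (wrElt d m (fun i => if i = 0 then wm else 1) η) * c⁻¹ = g) :=
  stmt13_general d m hm wm hwm
end
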